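/- Cauchy indices along subpaths combine: if γ : [0,1] → ℂ is a continuous path with finitely many real-part-constancy segments with respect to z₀, and 0 ≤ a ≤ b ≤ c ≤ 1, then cindex_pathE (subpath a b γ) z₀ + cindex_pathE (subpath b c γ) z₀ = cindex_pathE (subpath a c γ) z₀. -/

import Mathlib

open Complex Filter Topology Polynomial Set

open Classical in
noncomputable def jumpF (f : ℝ → ℝ) (F : Filter ℝ) : ℝ :=
  if Tendsto f F atTop then 1/2 else if Tendsto f F atBot then -1/2 else 0

noncomputable def cindexE (a b : ℝ) (f : ℝ → ℝ) : ℝ :=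
  (∑ᶠ x ∈ {x : ℝ | jumpF f (𝓝[>] x) ≠ 0 ∧ a ≤ x ∧ x < b}, jumpF f (𝓝[>] x)) -
  (∑ᶠ x ∈ {x : ℝ | jumpF f (𝓝[<] x) ≠ 0 ∧ a < x ∧ x ≤ b}, jumpF f (𝓝[<] x))

noncomputable def cindexPathE (γ : ℝ → ℂ) (z : ℂ) : ℝ :=
  cindexE 0 1 fun t => (γ t - z).im / (γ t - z).re

/-- A predicate `P` admits a finite segmentation of `[a,b]`. -/
inductive FinitePsegments (P : ℝ → Prop) : ℝ → ℝ → Prop where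
  | emptyI (a b : ℝ) (hab : b ≤ a) : FinitePsegments P a b
  | insertI_1 (a b s : ℝ) (hs : s ∈ Set.Ico a b) (h0 : s = a ∨ P s)
      (hP : ∀ t ∈ Set.Ioo s b, P t) (hrec : FinitePsegments P a s) :
      FinitePsegments P a b
  | insertI_2 (a b s : ℝ) (hs : s ∈ Set.Ico a b) (h0 : s = a ∨ P s)
      (hP : ∀ t ∈ Set.Ioo s b, ¬ P t) (hrec : FinitePsegments P a s) :
      FinitePsegments P a b

/-- `[0,1]` decomposes into finitely many consecutive subintervals on each of whose
interiors `Re (γ t - z) = 0` holds identically or fails identically. -/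
def finiteReZSegments (γ : ℝ → ℂ) (z : ℂ) : Prop :=
  FinitePsegments (fun t => (γ t - z).re = 0) 0 1

noncomputable def subpath (a b : ℝ) (γ : ℝ → ℂ) : ℝ → ℂ :=
  fun t => γ ((b - a) * t + a)

/-!
Reparametrising by the increasing affine map `t ↦ (q - p) * t + p` identifies the Cauchy index
of `subpath p q γ` over `[0, 1]` with the Cauchy index of `Im (γ - z₀) / Re (γ - z₀)` over
`[p, q]`. Written as a sum over `[p, q)` of right jumps minus a sum over `(p, q]` of left jumps,
that index is additive in the interval once the jump points are finitely many. They are: away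
from the finitely many endpoints of the segments, either `Re (γ - z₀)` vanishes near the point, so
the quotient is locally `0`, or it is nonzero there, so the quotient is continuous; in both cases
it has a finite limit and no jump.
-/

section OrderIso

variable {α β : Type*} [Preorder α] [TopologicalSpace α] [OrderTopology α]
  [Preorder β] [TopologicalSpace β] [OrderTopology β]

theorem OrderIso.map_nhdsGT (e : α ≃o β) (x : α) : map e (𝓝[>] x) = 𝓝[>] (e x) := by
  rw [← e.image_Ioi]
  exact e.toHomeomorph.isEmbedding.map_nhdsWithin_eq _ _

theorem OrderIso.map_nhdsLT (e : α ≃o β) (x : α) : map e (𝓝[<] x) = 𝓝[<] (e x) := by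
  rw [← e.image_Iio]
  exact e.toHomeomorph.isEmbedding.map_nhdsWithin_eq _ _

end OrderIso

theorem jumpF_comp (f g : ℝ → ℝ) (l : Filter ℝ) : jumpF (f ∘ g) l = jumpF f (map g l) := by
  classical
  exact if_congr tendsto_map'_iff.symm rfl (if_congr tendsto_map'_iff.symm rfl rfl)

theorem jumpF_eq_zero_of_tendsto {f : ℝ → ℝ} {l : Filter ℝ} [l.NeBot] {c : ℝ}
    (h : Tendsto f l (𝓝 c)) : jumpF f l = 0 := by
  rw [jumpF, if_neg (not_tendsto_atTop_of_tendsto_nhds h),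
    if_neg (not_tendsto_atBot_of_tendsto_nhds h)]

theorem cindexE_eq_finsum_sub (a b : ℝ) (f : ℝ → ℝ) :
    cindexE a b f = (∑ᶠ x ∈ Ico a b, jumpF f (𝓝[>] x)) - ∑ᶠ x ∈ Ioc a b, jumpF f (𝓝[<] x) := by
  rw [← finsum_mem_inter_support _ (Ico a b), ← finsum_mem_inter_support _ (Ioc a b)]
  exact congr_arg₂ (· - ·) (finsum_mem_congr (ext fun _ => and_comm) fun _ _ => rfl)
    (finsum_mem_congr (ext fun _ => and_comm) fun _ _ => rfl)

theorem cindexE_self (a : ℝ) (f : ℝ → ℝ) : cindexE a a f = 0 := by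
  simp [cindexE_eq_finsum_sub]

theorem cindexE_const (a b c : ℝ) : cindexE a b (fun _ => c) = 0 := by
  simp [cindexE_eq_finsum_sub, jumpF_eq_zero_of_tendsto tendsto_const_nhds]

theorem cindexE_comp_orderIso (e : ℝ ≃o ℝ) (a b : ℝ) (f : ℝ → ℝ) :
    cindexE a b (f ∘ e) = cindexE (e a) (e b) f := by
  simp only [cindexE_eq_finsum_sub, ← e.image_Ico, ← e.image_Ioc,
    finsum_mem_image e.injective.injOn, jumpF_comp, e.map_nhdsGT, e.map_nhdsLT]

theorem cindexE_add {f : ℝ → ℝ} {a b c : ℝ} (hab : a ≤ b) (hbc : b ≤ c)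
    (hright : (Ico a c ∩ Function.support fun x => jumpF f (𝓝[>] x)).Finite)
    (hleft : (Ioc a c ∩ Function.support fun x => jumpF f (𝓝[<] x)).Finite) :
    cindexE a b f + cindexE b c f = cindexE a c f := by
  simp only [cindexE_eq_finsum_sub, ← Ico_union_Ico_eq_Ico hab hbc, ← Ioc_union_Ioc_eq_Ioc hab hbc,
    union_inter_distrib_right, finite_union] at hright hleft ⊢
  rw [finsum_mem_union' Ico_disjoint_Ico_same hright.1 hright.2,
    finsum_mem_union' (Ioc_disjoint_Ioc_of_le le_rfl) hleft.1 hleft.2]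
  ring

theorem FinitePsegments.exists_finset {P : ℝ → Prop} {a b : ℝ} (h : FinitePsegments P a b) :
    ∃ S : Finset ℝ, ∀ x ∈ Ioo a b, x ∉ S → (∀ᶠ t in 𝓝 x, P t) ∨ ∀ᶠ t in 𝓝 x, ¬ P t := by
  induction h with
  | emptyI b hba => exact ⟨∅, fun x hx => absurd (hx.1.trans hx.2) (not_lt.2 hba)⟩
  | insertI_1 b s _ _ hP _ ih | insertI_2 b s _ _ hP _ ih =>
    obtain ⟨S, hS⟩ := ih
    refine ⟨insert s S, fun x hx hxS => ?_⟩
    rw [Finset.mem_insert, not_or] at hxS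
    rcases lt_or_gt_of_ne hxS.1 with hxs | hsx
    · exact hS x ⟨hx.1, hxs⟩ hxS.2
    · have hnear : ∀ᶠ t in 𝓝 x, t ∈ Ioo s b := Ioo_mem_nhds hsx hx.2
      first | exact .inl (hnear.mono hP) | exact .inr (hnear.mono hP)

theorem finite_inter_support_jumpF {f : ℝ → ℝ} {a b : ℝ} (S : Finset ℝ)
    (hf : ∀ x ∈ Ioo a b, x ∉ S → ∃ c, Tendsto f (𝓝 x) (𝓝 c))
    (L : ℝ → Filter ℝ) [∀ x, (L x).NeBot] (hL : ∀ x, L x ≤ 𝓝 x) :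
    (Icc a b ∩ Function.support fun x => jumpF f (L x)).Finite := by
  refine ((S.finite_toSet.insert b).insert a).subset fun x ⟨hx, hjump⟩ => ?_
  by_contra hxS
  simp only [mem_insert_iff, Finset.mem_coe, not_or] at hxS
  obtain ⟨c, hc⟩ := hf x ⟨hx.1.lt_of_ne' hxS.1, hx.2.lt_of_ne hxS.2.1⟩ hxS.2.2
  exact hjump (jumpF_eq_zero_of_tendsto (hc.mono_left (hL x)))

theorem finiteReZSegments.exists_finset_tendsto {γ : ℝ → ℂ} {z : ℂ}
    (hseg : finiteReZSegments γ z) (hγ : ContinuousOn γ (Icc 0 1)) :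
    ∃ S : Finset ℝ, ∀ x ∈ Ioo 0 1, x ∉ S →
      ∃ c, Tendsto (fun t => (γ t - z).im / (γ t - z).re) (𝓝 x) (𝓝 c) := by
  obtain ⟨S, hS⟩ := FinitePsegments.exists_finset hseg
  refine ⟨S, fun x hx hxS => ?_⟩
  rcases hS x hx hxS with hzero | hne
  · refine ⟨0, tendsto_const_nhds.congr' ?_⟩
    filter_upwards [hzero] with t ht
    rw [ht, div_zero]
  · have hγx : ContinuousAt (fun t => γ t - z) x :=
      (hγ.continuousAt (Icc_mem_nhds hx.1 hx.2)).sub continuousAt_const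
    exact ⟨_, ((continuous_im.continuousAt.comp hγx).div
      (continuous_re.continuousAt.comp hγx) hne.self_of_nhds).tendsto⟩

theorem cindexPathE_subpath (γ : ℝ → ℂ) (z : ℂ) {p q : ℝ} (hpq : p ≤ q) :
    cindexPathE (subpath p q γ) z = cindexE p q fun t => (γ t - z).im / (γ t - z).re := by
  rcases hpq.eq_or_lt with rfl | hpq
  · simp only [cindexPathE, subpath, sub_self, zero_mul, zero_add, cindexE_const, cindexE_self]
  · let e : ℝ ≃o ℝ := (OrderIso.mulLeft₀ (q - p) (sub_pos.2 hpq)).trans (OrderIso.addRight p)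
    have hsub : cindexPathE (subpath p q γ) z =
        cindexE 0 1 ((fun t => (γ t - z).im / (γ t - z).re) ∘ e) := rfl
    rw [hsub, cindexE_comp_orderIso]
    simp [e]

theorem cindex_pathE_subpath_combine (γ : ℝ → ℂ) (z₀ : ℂ) (a b c : ℝ)
    (hseg : finiteReZSegments γ z₀) (hpath : ContinuousOn γ (Set.Icc 0 1))
    (h0 : 0 ≤ a) (hab : a ≤ b) (hbc : b ≤ c) (hc : c ≤ 1) :
    cindexPathE (subpath a b γ) z₀ + cindexPathE (subpath b c γ) z₀
      = cindexPathE (subpath a c γ) z₀ := by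
  rw [cindexPathE_subpath γ z₀ hab, cindexPathE_subpath γ z₀ hbc,
    cindexPathE_subpath γ z₀ (hab.trans hbc)]
  obtain ⟨S, hS⟩ := hseg.exists_finset_tendsto hpath
  have hac : Icc a c ⊆ Icc 0 1 := Icc_subset_Icc h0 hc
  exact cindexE_add hab hbc
    ((finite_inter_support_jumpF S hS _ fun _ => nhdsWithin_le_nhds).subset
      (inter_subset_inter_left _ (Ico_subset_Icc_self.trans hac)))
    ((finite_inter_support_jumpF S hS _ fun _ => nhdsWithin_le_nhds).subset
      (inter_subset_inter_left _ (Ioc_subset_Icc_self.trans hac)))
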